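/- arXiv:1208.4578 — 2 statements merged into one kernel-verified Lean document; each statement's English description precedes it below -/
import Mathlib

section
/- Let g : ℝ → ℝ be continuous, of rapid decay, with all moments vanishing, and support not compact. Then there exists a sequence {x_n} with |x_n| → ∞ such that g(x_{2n}) > 0 and g(x_{2n+1}) < 0; in particular g has an unbounded sequence of sign changes. -/
open MeasureTheory Filter Topology

noncomputable def ft (f : ℝ → ℂ) (ω : ℝ) : ℂ :=
  ∫ x : ℝ, Complex.exp (-(Complex.I * ω * x)) * f x

def IsSignatureWavelet (κ : SchwartzMap ℝ ℂ) : Prop :=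
  κ ≠ 0 ∧
  (∃ c d : ℝ, 0 < c ∧ c < d ∧ ∀ ω : ℝ, ft (⇑κ) ω ≠ 0 → ω ∈ Set.Icc c d) ∧
  (∀ ω : ℝ, (ft (⇑κ) ω).im = 0 ∧ 0 ≤ (ft (⇑κ) ω).re)

noncomputable def csgn (z : ℂ) : ℂ := if z = 0 then 0 else z / ((‖z‖ : ℝ) : ℂ)

noncomputable def wcoeff (f : ℝ → ℂ) (κ : SchwartzMap ℝ ℂ) (a b : ℝ) : ℂ :=
  (Real.sqrt a : ℂ)⁻¹ * ∫ x : ℝ, f x * κ ((x - b) / a)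

open Classical in
noncomputable def signature (f : ℝ → ℂ) (b : ℝ) : ℂ :=
  if h : ∃ z : ℂ, ∀ κ : SchwartzMap ℝ ℂ, IsSignatureWavelet κ →
      Filter.Tendsto (fun a => csgn (wcoeff f κ a b)) (𝓝[>] (0:ℝ)) (𝓝 z)
  then h.choose else 0

/-!
If `g ≥ 0` on `|x| > R` and `R < m`, the vanishing of `∫ g x ^ (2k)` gives
`m ^ (2k) ∫_{|x| > m} g ≤ R ^ (2k) ‖g‖₁`: on `|x| ≤ R` the weight is at most `R ^ (2k)`, on
`R < |x|` the integrand is nonnegative, and beyond `m` the weight is at least `m ^ (2k)`. Letting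
`k → ∞` forces `∫_{|x| > m} g ≤ 0`, which is impossible for a continuous `g` that is positive at
some point beyond `m`. Since the support is unbounded, `g` is nonzero arbitrarily far out, so it
takes both signs arbitrarily far out.
-/

lemma integrable_mul_pow_of_abs_le {f : ℝ → ℝ} (hf : AEStronglyMeasurable f) {C : ℝ} {k : ℕ}
    (hC : ∀ x, |f x| ≤ C * (1 + |x|) ^ (-((k + 2 : ℕ) : ℝ))) :
    Integrable (fun x => f x * x ^ k) := by
  refine ((integrable_one_add_norm (r := 2) (by simp)).const_mul C).mono'
    (hf.mul (continuous_pow k).aestronglyMeasurable) (ae_of_all _ fun x => ?_)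
  have hexp : (1 + |x|) ^ (-((k + 2 : ℕ) : ℝ)) * (1 + |x|) ^ k = (1 + |x|) ^ (-(2 : ℝ)) := by
    rw [← Real.rpow_natCast _ k, ← Real.rpow_add (by positivity)]
    push_cast
    ring_nf
  calc ‖f x * x ^ k‖ = |f x| * |x| ^ k := by rw [Real.norm_eq_abs, abs_mul, abs_pow]
    _ ≤ C * (1 + |x|) ^ (-((k + 2 : ℕ) : ℝ)) * (1 + |x|) ^ k :=
      mul_le_mul (hC x) (pow_le_pow_left₀ (abs_nonneg x) (by linarith) k) (by positivity)
        ((abs_nonneg _).trans (hC x))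
    _ = C * (1 + ‖x‖) ^ (-(2 : ℝ)) := by rw [mul_assoc, hexp, Real.norm_eq_abs]

lemma exists_lt_abs_ne_zero_of_not_hasCompactSupport {f : ℝ → ℝ} (hf : ¬ HasCompactSupport f)
    (R : ℝ) : ∃ z, R < |z| ∧ f z ≠ 0 := by
  rw [hasCompactSupport_iff_eventuallyEq, coclosedCompact_eq_cocompact,
    ← Metric.cobounded_eq_cocompact, ← comap_norm_atTop, EventuallyEq, not_eventually,
    frequently_comap, frequently_atTop'] at hf
  obtain ⟨_, hR, z, rfl, hz⟩ := hf R
  exact ⟨z, hR, hz⟩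

lemma setIntegral_pos_of_continuous_of_isOpen {f : ℝ → ℝ} (hf : Continuous f) {U : Set ℝ}
    (hU : IsOpen U) (hint : IntegrableOn f U) (hnonneg : ∀ x ∈ U, 0 ≤ f x) {z : ℝ} (hz : z ∈ U)
    (hfz : 0 < f z) : 0 < ∫ x in U, f x := by
  rw [setIntegral_pos_iff_support_of_nonneg_ae
    (ae_restrict_of_forall_mem hU.measurableSet hnonneg) hint]
  exact (hf.isOpen_support.inter hU).measure_pos volume ⟨z, hfz.ne', hz⟩

lemma mul_indicator_sub_le_mul_pow {f : ℝ → ℝ} {R m : ℝ} (hR : 0 ≤ R) (hRm : R < m)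
    (hf : ∀ x, R < |x| → 0 ≤ f x) (k : ℕ) (x : ℝ) :
    m ^ k * {x | m < |x|}.indicator f x - R ^ k * |f x| ≤ f x * |x| ^ k := by
  have hRk : 0 ≤ R ^ k * |f x| := by positivity
  by_cases hmx : m < |x|
  · have hfx := hf x (hRm.trans hmx)
    rw [Set.indicator_of_mem (show x ∈ {x | m < |x|} from hmx)]
    calc m ^ k * f x - R ^ k * |f x| ≤ m ^ k * f x := by linarith
      _ ≤ f x * |x| ^ k := by
        rw [mul_comm]
        gcongr
        exact hR.trans hRm.le
  rw [Set.indicator_of_notMem (show x ∉ {x | m < |x|} from hmx), mul_zero, zero_sub]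
  by_cases hRx : R < |x|
  · have := mul_nonneg (hf x hRx) (pow_nonneg (abs_nonneg x) k)
    linarith
  · calc -(R ^ k * |f x|) ≤ -(|x| ^ k * |f x|) := by gcongr; exact not_lt.1 hRx
      _ = -|f x * |x| ^ k| := by rw [abs_mul, abs_pow, abs_abs, mul_comm]
      _ ≤ f x * |x| ^ k := neg_abs_le _

lemma setIntegral_lt_abs_nonpos_of_even_moments_eq_zero {f : ℝ → ℝ}
    (hint : ∀ k, Integrable fun x => f x * x ^ (2 * k)) (hmom : ∀ k, ∫ x, f x * x ^ (2 * k) = 0)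
    {R m : ℝ} (hR : 0 ≤ R) (hRm : R < m) (hpos : ∀ x, R < |x| → 0 ≤ f x) :
    ∫ x in {x | m < |x|}, f x ≤ 0 := by
  have hf : Integrable f := by simpa using hint 0
  have hm : 0 < m := hR.trans_lt hRm
  have hU : MeasurableSet {x : ℝ | m < |x|} := measurableSet_lt measurable_const measurable_abs
  have hbound : ∀ k : ℕ, ∫ x in {x | m < |x|}, f x ≤ ((R / m) ^ 2) ^ k * ∫ x, |f x| := by
    intro k
    have h : ∫ x, (m ^ (2 * k) * {x | m < |x|}.indicator f x - R ^ (2 * k) * |f x|) ≤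
        ∫ x, f x * x ^ (2 * k) :=
      integral_mono (((hf.indicator hU).const_mul _).sub (hf.abs.const_mul _)) (hint k) fun x => by
        simpa only [(even_two_mul k).pow_abs] using
          mul_indicator_sub_le_mul_pow hR hRm hpos (2 * k) x
    rw [integral_sub ((hf.indicator hU).const_mul _) (hf.abs.const_mul _), integral_const_mul,
      integral_const_mul, integral_indicator hU, hmom k, sub_nonpos] at h
    rw [← pow_mul, div_pow, div_mul_eq_mul_div, le_div_iff₀ (by positivity), mul_comm]
    exact h
  have hlim : Tendsto (fun k : ℕ => ((R / m) ^ 2) ^ k * ∫ x, |f x|) atTop (𝓝 0) := by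
    simpa using (tendsto_pow_atTop_nhds_zero_of_lt_one (by positivity)
      (pow_lt_one₀ (by positivity) ((div_lt_one hm).2 hRm) two_ne_zero)).mul_const
      (∫ x, |f x|)
  exact ge_of_tendsto' hlim hbound

lemma exists_lt_abs_neg_of_even_moments_eq_zero {f : ℝ → ℝ} (hcont : Continuous f)
    (hint : ∀ k, Integrable fun x => f x * x ^ (2 * k)) (hmom : ∀ k, ∫ x, f x * x ^ (2 * k) = 0)
    {R z : ℝ} (hR : 0 ≤ R) (hz : R < |z|) (hfz : 0 < f z) : ∃ x, R < |x| ∧ f x < 0 := by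
  by_contra! hpos
  obtain ⟨m, hRm, hmz⟩ := exists_between hz
  have hle := setIntegral_lt_abs_nonpos_of_even_moments_eq_zero hint hmom hR hRm hpos
  have hlt : 0 < ∫ x in {x | m < |x|}, f x :=
    setIntegral_pos_of_continuous_of_isOpen hcont (isOpen_lt continuous_const continuous_abs)
      (by simpa using (hint 0).integrableOn) (fun x hx => hpos x (hRm.trans hx)) hmz hfz
  linarith

lemma exists_lt_abs_pos_and_neg_of_even_moments_eq_zero {f : ℝ → ℝ} (hcont : Continuous f)
    (hint : ∀ k, Integrable fun x => f x * x ^ (2 * k)) (hmom : ∀ k, ∫ x, f x * x ^ (2 * k) = 0)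
    (hsupp : ¬ HasCompactSupport f) (R : ℝ) :
    (∃ x, R < |x| ∧ 0 < f x) ∧ ∃ x, R < |x| ∧ f x < 0 := by
  have hR : 0 ≤ max R 0 := le_max_right R 0
  have hlt : ∀ {x}, max R 0 < |x| → R < |x| := (le_max_left R 0).trans_lt
  obtain ⟨z, hz, hfz⟩ := exists_lt_abs_ne_zero_of_not_hasCompactSupport hsupp (max R 0)
  rcases hfz.lt_or_gt with hfz | hfz
  · obtain ⟨x, hx, hfx⟩ := exists_lt_abs_neg_of_even_moments_eq_zero (f := -f) hcont.neg
      (fun k => by simpa only [Pi.neg_apply, neg_mul] using (hint k).fun_neg)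
      (fun k => by simp only [Pi.neg_apply, neg_mul, integral_neg, hmom k, neg_zero])
      hR hz (neg_pos.2 hfz)
    exact ⟨⟨x, hlt hx, neg_neg_iff_pos.1 hfx⟩, z, hlt hz, hfz⟩
  · obtain ⟨x, hx, hfx⟩ := exists_lt_abs_neg_of_even_moments_eq_zero hcont hint hmom hR hz hfz
    exact ⟨⟨z, hlt hz, hfz⟩, x, hlt hx, hfx⟩

lemma exists_seq_tendsto_abs_atTop_even_odd {P Q : ℝ → Prop} (hP : ∀ R, ∃ x, R < |x| ∧ P x)
    (hQ : ∀ R, ∃ x, R < |x| ∧ Q x) :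
    ∃ x : ℕ → ℝ, Tendsto (fun n => |x n|) atTop atTop ∧
      (∀ n, P (x (2 * n))) ∧ ∀ n, Q (x (2 * n + 1)) := by
  choose u hu using hP
  choose v hv using hQ
  refine ⟨fun n => if Even n then u n else v n, ?_, fun n => ?_, fun n => ?_⟩
  · refine tendsto_atTop_mono (fun n => ?_) tendsto_natCast_atTop_atTop
    dsimp only
    split_ifs
    exacts [(hu n).1.le, (hv n).1.le]
  · simpa [even_two_mul] using (hu _).2
  · simpa [Nat.not_even_iff_odd] using (hv _).2

theorem moments_vanish_noncompact_support_sign_changes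
    (g : ℝ → ℝ) (hcont : Continuous g)
    (hdecay : ∀ k : ℕ, ∃ C : ℝ, ∀ x : ℝ, |g x| ≤ C * (1 + |x|) ^ (-(k : ℝ)))
    (hmom : ∀ k : ℕ, ∫ x : ℝ, g x * x ^ k = 0)
    (hsupp : ¬ IsCompact (tsupport g)) :
    ∃ x : ℕ → ℝ, Filter.Tendsto (fun n => |x n|) Filter.atTop Filter.atTop ∧
      (∀ n : ℕ, 0 < g (x (2 * n))) ∧ (∀ n : ℕ, g (x (2 * n + 1)) < 0) := by
  have hint (k : ℕ) : Integrable fun x => g x * x ^ k :=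
    have ⟨_, hC⟩ := hdecay (k + 2)
    integrable_mul_pow_of_abs_le hcont.aestronglyMeasurable hC
  have hsign := exists_lt_abs_pos_and_neg_of_even_moments_eq_zero hcont (fun k => hint (2 * k))
    (fun k => hmom (2 * k)) hsupp
  exact exists_seq_tendsto_abs_atTop_even_odd (fun R => (hsign R).1) (fun R => (hsign R).2)
end

section
/- Under the hypotheses of the jump theorem (f locally integrable, polynomial growth, continuous near b except a jump of height Θ = f(b+)−f(b−) at b = 0), the symmetric part contribution satisfies a^{-1/2}⟨f^S, Re κ_{a,0}⟩ → 0 as a → 0, where f^S(x) = (f(x)+f(−x))/2 is extended continuously at 0 with f^S(0) = 0. -/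
open MeasureTheory Filter Topology

/-!
Split `a⁻¹ ∫ g(x) ψ(x/a) dx` at a ball `|x| ≤ δ` on which `|g| ≤ η`. Since `a⁻¹ ψ(·/a)` has the
same `L¹` norm as `ψ`, the inner part is at most `η ‖ψ‖₁`. Outside the ball the Schwartz decay
`‖ψ(x/a)‖ ≤ a^(N+2) p_{N+2}(ψ) / |x|^(N+2)` beats the growth `|g(x)| ≤ C |x|^N`, so the outer
part is `O(a^(N+1))`. The kernel `Re κ` is itself a Schwartz function, `κ` postcomposed with `re`.
-/

open scoped SchwartzMap

theorem MeasureTheory.LocallyIntegrable.comp_neg {G E : Type*} [TopologicalSpace G]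
    [MeasurableSpace G] [BorelSpace G] [InvolutiveNeg G] [ContinuousNeg G]
    [NormedAddCommGroup E] {μ : Measure G} [μ.IsNegInvariant] {f : G → E}
    (hf : LocallyIntegrable f μ) : LocallyIntegrable (fun x => f (-x)) μ :=
  (locallyIntegrable_map_homeomorph (Homeomorph.neg G)).1 <| by
    rwa [Homeomorph.coe_neg, Measure.map_neg_eq_self]

theorem one_add_sq_mul_pow_le {x : ℝ} (hx : 1 ≤ |x|) (N : ℕ) :
    (1 + x ^ 2) * |x| ^ N ≤ 2 * |x| ^ (N + 2) := by
  have hx2 : 1 ≤ x ^ 2 := by nlinarith [sq_abs x]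
  have : |x| ^ (N + 2) = x ^ 2 * |x| ^ N := by rw [pow_add, sq_abs, mul_comm]
  rw [this]
  nlinarith [pow_nonneg (abs_nonneg x) N]

section

variable {F : Type*} [NormedAddCommGroup F] [NormedSpace ℝ F]

theorem SchwartzMap.pow_mul_norm_comp_div_le (ψ : 𝓢(ℝ, F)) (k : ℕ) {a : ℝ} (ha : 0 < a)
    (x : ℝ) : |x| ^ k * ‖ψ (x / a)‖ ≤ a ^ k * SchwartzMap.seminorm ℝ k 0 ψ := by
  have h := ψ.norm_pow_mul_le_seminorm ℝ k (x / a)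
  rw [Real.norm_eq_abs, abs_div, abs_of_pos ha, div_pow] at h
  rwa [div_mul_eq_mul_div, div_le_iff₀' (by positivity)] at h

variable {g : ℝ → ℝ} {N : ℕ} {C M : ℝ}

theorem integrable_smul_of_growth_of_decay (hg : LocallyIntegrable g)
    (hgrowth : ∀ x, M ≤ |x| → |g x| ≤ C * |x| ^ N) {φ : ℝ → F} (hφ : Continuous φ) {K : ℝ}
    (hdecay : ∀ x, |x| ^ (N + 2) * ‖φ x‖ ≤ K) : Integrable (fun x => g x • φ x) := by
  refine (hg.smul_continuous hφ).integrable_of_isBigO_cocompact ?_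
    (integrable_inv_one_add_sq.integrableAtFilter _)
  refine Asymptotics.IsBigO.of_bound (2 * |C| * K) ?_
  filter_upwards [tendsto_norm_cocompact_atTop.eventually_ge_atTop (max M 1)] with x hx
  rw [Real.norm_eq_abs] at hx
  have hx1 : 1 ≤ |x| := le_of_max_le_right hx
  rw [norm_smul, Real.norm_eq_abs, Real.norm_of_nonneg (by positivity), ← div_eq_mul_inv,
    le_div_iff₀ (by positivity)]
  calc |g x| * ‖φ x‖ * (1 + x ^ 2)
      ≤ |C| * |x| ^ N * ‖φ x‖ * (1 + x ^ 2) := by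
        gcongr
        exact (hgrowth x (le_of_max_le_left hx)).trans (by gcongr; exact le_abs_self C)
    _ = |C| * ‖φ x‖ * ((1 + x ^ 2) * |x| ^ N) := by ring
    _ ≤ |C| * ‖φ x‖ * (2 * |x| ^ (N + 2)) := by grw [one_add_sq_mul_pow_le hx1 N]
    _ = 2 * |C| * (|x| ^ (N + 2) * ‖φ x‖) := by ring
    _ ≤ 2 * |C| * K := by gcongr; exact hdecay x

theorem integrableOn_compl_closedBall_norm_div_pow (hg : LocallyIntegrable g)
    (hgrowth : ∀ x, M ≤ |x| → |g x| ≤ C * |x| ^ N) {δ : ℝ} (hδ : 0 < δ) :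
    IntegrableOn (fun x => ‖g x‖ / |x| ^ (N + 2)) (Metric.closedBall 0 δ)ᶜ := by
  -- `max δ |x|` agrees with `|x|` off the ball and keeps the weight continuous at `0`.
  have hweight : Continuous fun x : ℝ => (max δ |x| ^ (N + 2))⁻¹ :=
    (continuous_const.max continuous_abs).pow _ |>.inv₀ fun x =>
      (pow_pos (hδ.trans_le (le_max_left _ _)) _).ne'
  have hint := integrable_smul_of_growth_of_decay hg hgrowth hweight (K := 1) fun x => by
    rw [Real.norm_of_nonneg (by positivity), ← div_eq_mul_inv,
      div_le_one (pow_pos (hδ.trans_le (le_max_left _ _)) _)]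
    gcongr
    exact le_max_right _ _
  refine hint.norm.integrableOn.congr_fun (fun x hx => ?_) measurableSet_closedBall.compl
  rw [Set.mem_compl_iff, mem_closedBall_zero_iff, not_le, Real.norm_eq_abs] at hx
  have hpos : 0 ≤ (|x| ^ (N + 2))⁻¹ := by positivity
  simp only [norm_smul, max_eq_right hx.le, Real.norm_of_nonneg hpos, div_eq_mul_inv]

theorem setIntegral_norm_smul_comp_div_le_of_norm_le {ψ : ℝ → F} (hψ : Integrable ψ) {s : Set ℝ}
    (hs : MeasurableSet s) {η : ℝ} (hη0 : 0 ≤ η) (hη : ∀ x ∈ s ∩ {0}ᶜ, ‖g x‖ ≤ η) {a : ℝ}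
    (ha : 0 < a) : ∫ x in s, ‖g x • ψ (x / a)‖ ≤ η * (a * ∫ y, ‖ψ y‖) := by
  have hint : Integrable fun x => η * ‖ψ (x / a)‖ := (hψ.norm.comp_div ha.ne').const_mul η
  calc ∫ x in s, ‖g x • ψ (x / a)‖
      ≤ ∫ x in s, η * ‖ψ (x / a)‖ := by
        refine integral_mono_of_nonneg (ae_of_all _ fun _ => norm_nonneg _) hint.integrableOn ?_
        filter_upwards [ae_restrict_mem hs, Measure.ae_ne _ 0] with x hxs hx0
        rw [norm_smul]
        gcongr
        exact hη x ⟨hxs, hx0⟩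
    _ ≤ ∫ x, η * ‖ψ (x / a)‖ := setIntegral_le_integral hint (ae_of_all _ fun _ => by positivity)
    _ = η * (a * ∫ y, ‖ψ y‖) := by
        rw [integral_const_mul, Measure.integral_comp_div (fun y => ‖ψ y‖), smul_eq_mul,
          abs_of_pos ha]

theorem SchwartzMap.setIntegral_norm_smul_comp_div_le (ψ : 𝓢(ℝ, F)) (k : ℕ) {s : Set ℝ}
    (hint : IntegrableOn (fun x => ‖g x‖ / |x| ^ k) s) {a : ℝ} (ha : 0 < a) :
    ∫ x in s, ‖g x • ψ (x / a)‖ ≤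
      a ^ k * SchwartzMap.seminorm ℝ k 0 ψ * ∫ x in s, ‖g x‖ / |x| ^ k := by
  rw [← integral_const_mul]
  refine integral_mono_of_nonneg (ae_of_all _ fun _ => norm_nonneg _) (hint.const_mul _) ?_
  filter_upwards [Measure.ae_ne _ 0] with x hx0
  have hxk : 0 < |x| ^ k := pow_pos (abs_pos.2 hx0) k
  rw [norm_smul, show a ^ k * SchwartzMap.seminorm ℝ k 0 ψ * (‖g x‖ / |x| ^ k) =
    ‖g x‖ * (a ^ k * SchwartzMap.seminorm ℝ k 0 ψ / |x| ^ k) by ring]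
  gcongr
  rw [le_div_iff₀' hxk]
  exact ψ.pow_mul_norm_comp_div_le k ha x

theorem SchwartzMap.norm_inv_smul_integral_smul_comp_div_le (ψ : 𝓢(ℝ, F))
    (hg : LocallyIntegrable g) (hgrowth : ∀ x, M ≤ |x| → |g x| ≤ C * |x| ^ N) {δ η : ℝ}
    (hδ : 0 < δ) (hη0 : 0 ≤ η) (hη : ∀ x ∈ Metric.closedBall 0 δ ∩ {0}ᶜ, ‖g x‖ ≤ η) {a : ℝ}
    (ha : 0 < a) :
    ‖a⁻¹ • ∫ x, g x • ψ (x / a)‖ ≤ η * (∫ y, ‖ψ y‖) + a ^ (N + 1) *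
      (SchwartzMap.seminorm ℝ (N + 2) 0 ψ *
        ∫ x in (Metric.closedBall 0 δ)ᶜ, ‖g x‖ / |x| ^ (N + 2)) := by
  have hint : Integrable fun x => g x • ψ (x / a) :=
    integrable_smul_of_growth_of_decay hg hgrowth (ψ.continuous.comp (continuous_id.div_const a))
      (ψ.pow_mul_norm_comp_div_le (N + 2) ha)
  have hnear := setIntegral_norm_smul_comp_div_le_of_norm_le ψ.integrable
    measurableSet_closedBall hη0 hη ha
  have hfar := ψ.setIntegral_norm_smul_comp_div_le (N + 2)
    (integrableOn_compl_closedBall_norm_div_pow hg hgrowth hδ) ha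
  calc ‖a⁻¹ • ∫ x, g x • ψ (x / a)‖
      ≤ a⁻¹ * ∫ x, ‖g x • ψ (x / a)‖ := by
        rw [norm_smul, Real.norm_of_nonneg (inv_nonneg.2 ha.le)]
        gcongr
        exact norm_integral_le_integral_norm _
    _ = a⁻¹ * ((∫ x in Metric.closedBall 0 δ, ‖g x • ψ (x / a)‖) +
          ∫ x in (Metric.closedBall 0 δ)ᶜ, ‖g x • ψ (x / a)‖) := by
        rw [integral_add_compl measurableSet_closedBall hint.norm]
    _ ≤ a⁻¹ * (η * (a * ∫ y, ‖ψ y‖) + a ^ (N + 2) * SchwartzMap.seminorm ℝ (N + 2) 0 ψ *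
          ∫ x in (Metric.closedBall 0 δ)ᶜ, ‖g x‖ / |x| ^ (N + 2)) := by
        gcongr
    _ = _ := by
        field_simp
        ring

theorem SchwartzMap.tendsto_inv_smul_integral_smul_comp_div (ψ : 𝓢(ℝ, F))
    (hg : LocallyIntegrable g) (hgrowth : ∀ x, M ≤ |x| → |g x| ≤ C * |x| ^ N)
    (hg0 : Tendsto g (𝓝[≠] 0) (𝓝 0)) :
    Tendsto (fun a => a⁻¹ • ∫ x, g x • ψ (x / a)) (𝓝[>] 0) (𝓝 0) := by
  rw [Metric.tendsto_nhds]
  intro ε hε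
  set K := ∫ y, ‖ψ y‖
  have hK : 0 ≤ K := integral_nonneg fun _ => norm_nonneg _
  set η := ε / (2 * (K + 1))
  have hη : 0 < η := by positivity
  have hηK : η * K < ε / 2 := by
    rw [div_mul_eq_mul_div, div_lt_iff₀ (by positivity)]
    nlinarith
  obtain ⟨δ, hδ, hgδ⟩ := ((nhdsWithin_hasBasis Metric.nhds_basis_closedBall _).eventually_iff).1
    (hg0.eventually (Metric.closedBall_mem_nhds 0 hη))
  set c := SchwartzMap.seminorm ℝ (N + 2) 0 ψ *
    ∫ x in (Metric.closedBall 0 δ)ᶜ, ‖g x‖ / |x| ^ (N + 2)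
  have hfar : Tendsto (fun a : ℝ => a ^ (N + 1) * c) (𝓝[>] 0) (𝓝 0) := by
    have hcont : Continuous fun a : ℝ => a ^ (N + 1) * c := by fun_prop
    simpa using (hcont.tendsto 0).mono_left nhdsWithin_le_nhds
  filter_upwards [self_mem_nhdsWithin, hfar.eventually (Iio_mem_nhds (half_pos hε))]
    with a ha hsmall
  rw [dist_zero_right]
  calc _ ≤ η * K + a ^ (N + 1) * c := ψ.norm_inv_smul_integral_smul_comp_div_le hg hgrowth hδ
          hη.le (fun x hx => mem_closedBall_zero_iff.1 (hgδ hx)) ha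
    _ < ε := by linarith

end

theorem jump_symmetric_part_vanishes_general
    (f : ℝ → ℝ)
    (hloc : MeasureTheory.LocallyIntegrable f)
    (hgrowth : ∃ (N : ℕ) (C M : ℝ), ∀ x : ℝ, M ≤ |x| → |f x| ≤ C * |x| ^ N)
    (hS0 : Filter.Tendsto (fun x => (f x + f (-x)) / 2) (𝓝[≠] (0:ℝ)) (𝓝 0))
    (κ : SchwartzMap ℝ ℂ) :
    Filter.Tendsto (fun a => (1 / a) * ∫ x : ℝ, ((f x + f (-x)) / 2) * (κ (x / a)).re)
      (𝓝[>] (0:ℝ)) (𝓝 0) := by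
  obtain ⟨N, C, M, hf⟩ := hgrowth
  have hsymm_growth : ∀ x, M ≤ |x| → |(f x + f (-x)) / 2| ≤ C * |x| ^ N := fun x hx => by
    have h₁ := hf x hx
    have h₂ := hf (-x) (by rwa [abs_neg])
    rw [abs_neg] at h₂
    rw [abs_div, abs_two]
    linarith [abs_add_le (f x) (f (-x))]
  have hsymm_loc : LocallyIntegrable fun x => (f x + f (-x)) / 2 := by
    convert (hloc.add hloc.comp_neg).smul (2⁻¹ : ℝ) using 1
    ext x
    simp only [Pi.smul_apply, Pi.add_apply, smul_eq_mul]
    ring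
  simpa [one_div] using (κ.postcompCLM Complex.reCLM).tendsto_inv_smul_integral_smul_comp_div
    hsymm_loc hsymm_growth hS0

theorem jump_symmetric_part_vanishes
    (f : ℝ → ℝ) (L R : ℝ)
    (hloc : MeasureTheory.LocallyIntegrable f)
    (hgrowth : ∃ (N : ℕ) (C M : ℝ), ∀ x : ℝ, M ≤ |x| → |f x| ≤ C * |x| ^ N)
    (hU : ∃ U ∈ 𝓝 (0:ℝ), ContinuousOn f (U \ {0}))
    (hL : Filter.Tendsto f (𝓝[<] (0:ℝ)) (𝓝 L))
    (hR : Filter.Tendsto f (𝓝[>] (0:ℝ)) (𝓝 R))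
    (hjump : L ≠ R)
    (hS0 : Filter.Tendsto (fun x => (f x + f (-x)) / 2) (𝓝[≠] (0:ℝ)) (𝓝 0))
    (κ : SchwartzMap ℝ ℂ) (hκ : IsSignatureWavelet κ) :
    Filter.Tendsto (fun a => (1 / a) * ∫ x : ℝ, ((f x + f (-x)) / 2) * (κ (x / a)).re)
      (𝓝[>] (0:ℝ)) (𝓝 0) :=
  jump_symmetric_part_vanishes_general f hloc hgrowth hS0 κ
end
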